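/- arXiv:1901.09687 — 2 statements merged into one kernel-verified Lean document; each statement's English description precedes it below -/
import Mathlib

section
/- With m = ⌊1/p - 1⌋₂ (the largest power of 2 at most 1/p - 1) and p ∈ (0, 1/2], the zero-error aspect ratio A = 1/m + (1 + log₂ m - 1/m) p satisfies A < 1.11 · H(p), where H(p) = -p log₂ p - (1-p) log₂(1-p) is the binary entropy. Equivalently, the achievable zero-error rate H(p)/A exceeds 0.9 for all p ∈ (0, 1/2]. -/
/-!
Write `m = 2^j`, so that `1/(2m+1) < p ≤ 1/(m+1)`. On this interval `A` is affine in `p`, with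
values `(j+3)/(2^(j+1)+1)` and `(j+2)/(2^j+1)` at the two ends: `A` is the piecewise-linear
interpolation of the values `(j+2)/(2^j+1)` at the nodes `p = 1/(2^j+1)`. Since `H` is concave, it
suffices to check the inequality at the nodes, where
`(2^j+1) H(1/(2^j+1)) = j + (2^j+1) log₂(1 + 2^-j)`. For `j ≥ 4` the bound `(2^j+1) log(1 + 2^-j) ≥ 1`
is enough; `j ≤ 3` is numerical, `j = 2` being the tightest case (`4 < 4.007`).
-/

/-- Binary entropy (in bits). -/
noncomputable def binEnt (p : ℝ) : ℝ := -p * Real.logb 2 p - (1 - p) * Real.logb 2 (1 - p)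

open Real

theorem ConcaveOn.affine_lt_of_lt_of_lt {s : Set ℝ} {f : ℝ → ℝ} (hf : ConcaveOn ℝ s f)
    {a b x c d : ℝ} (ha : a ∈ s) (hb : b ∈ s) (hx : x ∈ Set.Icc a b)
    (hfa : c + d * a < f a) (hfb : c + d * b < f b) : c + d * x < f x := by
  rw [← segment_eq_Icc (hx.1.trans hx.2)] at hx
  obtain ⟨θ, η, hθ, hη, hsum, rfl⟩ := hx
  have hconc := hf.2 ha hb hθ hη hsum
  simp only [smul_eq_mul] at hconc ⊢
  have hsplit : c + d * (θ * a + η * b) = θ * (c + d * a) + η * (c + d * b) := by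
    linear_combination (-c) * hsum
  rcases hθ.eq_or_lt with rfl | hθ
  · rw [zero_add] at hsum
    subst hsum
    simpa using hfb
  · nlinarith [mul_lt_mul_of_pos_left hfa hθ, mul_le_mul_of_nonneg_left hfb.le hη]

theorem binEnt_eq_binEntropy_div (p : ℝ) : binEnt p = binEntropy p / log 2 := by
  simp only [binEnt, binEntropy, logb, log_inv]
  ring

theorem concaveOn_binEnt : ConcaveOn ℝ (Set.Icc 0 1) binEnt := by
  have h : binEnt = fun p ↦ (log 2)⁻¹ • binEntropy p := by
    funext p
    rw [binEnt_eq_binEntropy_div, smul_eq_mul, div_eq_inv_mul]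
  rw [h]
  exact strictConcave_binEntropy.concaveOn.smul (inv_nonneg.2 (log_nonneg one_le_two))

theorem neg_sum_sub_le_log_one_add {y : ℝ} (hy0 : 0 ≤ y) (hy1 : y < 1) (n : ℕ) :
    -(∑ i ∈ Finset.range n, (-y) ^ (i + 1) / (i + 1)) - y ^ (n + 1) / (1 - y) ≤ log (1 + y) := by
  have h := abs_log_sub_add_sum_range_le (x := -y) (by rw [abs_neg, abs_of_nonneg hy0]; exact hy1) n
  rw [abs_neg, abs_of_nonneg hy0, sub_neg_eq_add] at h
  linarith [(abs_le.1 h).1]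

theorem log_three_div_two_gt : 0.4 < log (3 / 2) := by
  have h := neg_sum_sub_le_log_one_add (y := 1 / 2) (by norm_num) (by norm_num) 8
  norm_num [Finset.sum_range_succ] at h
  linarith

theorem log_five_div_four_gt : 0.2228 < log (5 / 4) := by
  have h := neg_sum_sub_le_log_one_add (y := 1 / 4) (by norm_num) (by norm_num) 5
  norm_num [Finset.sum_range_succ] at h
  linarith

theorem log_nine_div_eight_gt : 0.1177 < log (9 / 8) := by
  have h := neg_sum_sub_le_log_one_add (y := 1 / 8) (by norm_num) (by norm_num) 4
  norm_num [Finset.sum_range_succ] at h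
  linarith

theorem one_le_add_one_mul_log_one_add_inv {x : ℝ} (hx : 0 < x) :
    1 ≤ (x + 1) * log (1 + x⁻¹) := by
  have h := one_sub_inv_le_log_of_pos (show 0 < 1 + x⁻¹ by positivity)
  have e : 1 - (1 + x⁻¹)⁻¹ = (x + 1)⁻¹ := by field_simp; ring
  rw [e] at h
  calc (1 : ℝ) = (x + 1) * (x + 1)⁻¹ := (mul_inv_cancel₀ (by positivity)).symm
    _ ≤ (x + 1) * log (1 + x⁻¹) := by gcongr

theorem binEnt_one_div_two_pow_add_one (j : ℕ) :
    binEnt (1 / (2 ^ j + 1)) =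
      (j * log 2 + (2 ^ j + 1) * log (1 + (2 ^ j)⁻¹)) / ((2 ^ j + 1) * log 2) := by
  have hn : (0 : ℝ) < 2 ^ j := by positivity
  have hl2 : log 2 ≠ 0 := (log_pos one_lt_two).ne'
  have hsub : (1 : ℝ) - 1 / (2 ^ j + 1) = 2 ^ j / (2 ^ j + 1) := by field_simp; ring
  have hadd : (1 : ℝ) + (2 ^ j)⁻¹ = (2 ^ j + 1) / 2 ^ j := by field_simp
  rw [binEnt, hsub, hadd, logb, logb, log_div one_ne_zero (by positivity), log_one,
    log_div hn.ne' (by positivity), log_div (by positivity) hn.ne', log_pow]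
  field_simp
  ring

theorem add_two_mul_log_two_lt (j : ℕ) :
    (j + 2) * log 2 < 1.11 * (j * log 2 + (2 ^ j + 1) * log (1 + (2 ^ j)⁻¹)) := by
  have hl2 := log_pos one_lt_two
  rcases lt_or_ge j 4 with hj | hj
  · interval_cases j <;> norm_num
    · linarith
    · linarith [log_three_div_two_gt, log_two_lt_d9]
    · linarith [log_five_div_four_gt, log_two_lt_d9]
    · linarith [log_nine_div_eight_gt, log_two_lt_d9]
  · have h1 := one_le_add_one_mul_log_one_add_inv (x := 2 ^ j) (by positivity)
    have hj4 : (4 : ℝ) ≤ j := by exact_mod_cast hj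
    nlinarith [mul_le_mul_of_nonneg_right hj4 hl2.le, log_two_lt_d9]

theorem add_two_div_lt_binEnt (j : ℕ) :
    (j + 2) / (2 ^ j + 1) < 1.11 * binEnt (1 / (2 ^ j + 1)) := by
  have hn : (0 : ℝ) < 2 ^ j + 1 := by positivity
  rw [binEnt_one_div_two_pow_add_one, mul_div_assoc', div_lt_div_iff₀ hn (by positivity),
    mul_comm (2 ^ j + 1 : ℝ) (log 2), ← mul_assoc]
  exact mul_lt_mul_of_pos_right (add_two_mul_log_two_lt j) hn

noncomputable def aspectRatio (m p : ℝ) : ℝ := 1 / m + (1 + logb 2 m - 1 / m) * p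

theorem aspectRatio_two_pow_one_div_two_pow_add_one (j : ℕ) :
    aspectRatio (2 ^ j) (1 / (2 ^ j + 1)) = (j + 2) / (2 ^ j + 1) := by
  rw [aspectRatio, logb_pow, logb_self_eq_one one_lt_two]
  field_simp
  ring

theorem aspectRatio_two_pow_one_div_two_pow_succ_add_one (j : ℕ) :
    aspectRatio (2 ^ j) (1 / (2 ^ (j + 1) + 1)) = ((j + 1 : ℕ) + 2) / (2 ^ (j + 1) + 1) := by
  rw [aspectRatio, logb_pow, logb_self_eq_one one_lt_two, pow_succ]
  field_simp
  push_cast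
  ring

theorem exists_two_zpow_floor_logb_eq {x : ℝ} (hx : 1 ≤ x) :
    ∃ j : ℕ, (2 : ℝ) ^ ⌊logb 2 x⌋ = 2 ^ j ∧ 2 ^ j ≤ x ∧ x < 2 ^ (j + 1) := by
  have hfloor : ⌊logb 2 x⌋ = Int.log 2 x := by
    exact_mod_cast floor_logb_natCast (b := 2) (zero_le_one.trans hx)
  have hlog : Int.log 2 x = (Nat.log 2 ⌊x⌋₊ : ℤ) := Int.log_of_one_le_right 2 hx
  refine ⟨Nat.log 2 ⌊x⌋₊, by rw [hfloor, hlog, zpow_natCast], ?_, ?_⟩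
  · have h := Int.zpow_log_le_self (b := 2) one_lt_two (zero_lt_one.trans_le hx)
    rwa [hlog, zpow_natCast, Nat.cast_ofNat] at h
  · have h := Int.lt_zpow_succ_log_self (b := 2) one_lt_two x
    rwa [hlog, ← Nat.cast_succ, zpow_natCast, Nat.cast_ofNat] at h

/-- With `m = ⌊1/p - 1⌋₂` the largest power of two at most `1/p - 1`, the
zero-error aspect ratio `A = 1/m + (1 + log₂ m - 1/m) p` satisfies
`A < 1.11 H(p)` for all `p ∈ (0, 1/2]`; equivalently the zero-error rate
`H(p)/A` exceeds `0.9`. -/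
theorem stmt_9 (p : ℝ) (hp0 : 0 < p) (hp1 : p ≤ 1 / 2) :
    let m : ℝ := 2 ^ ⌊Real.logb 2 (1 / p - 1)⌋
    1 / m + (1 + Real.logb 2 m - 1 / m) * p < 1.11 * binEnt p := by
  intro m
  have hx : 1 ≤ 1 / p - 1 := by
    rw [le_sub_iff_add_le, le_one_div (by norm_num) hp0]
    linarith
  obtain ⟨j, hm, hjx, hxj⟩ := exists_two_zpow_floor_logb_eq hx
  have hmem : ∀ y : ℝ, 0 ≤ y → 1 / (y + 1) ∈ Set.Icc (0 : ℝ) 1 := fun y hy ↦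
    ⟨by positivity, (div_le_one (by positivity)).2 (by linarith)⟩
  have hp : p ∈ Set.Icc (1 / (2 ^ (j + 1) + 1)) (1 / (2 ^ j + 1)) := by
    constructor
    · rw [one_div_le (by positivity) hp0]
      linarith
    · rw [le_one_div hp0 (by positivity)]
      linarith
  change aspectRatio m p < 1.11 * binEnt p
  rw [show m = 2 ^ j from hm]
  refine (concaveOn_binEnt.smul (by norm_num : (0 : ℝ) ≤ 1.11)).affine_lt_of_lt_of_lt
    (hmem _ (by positivity)) (hmem _ (by positivity)) hp ?_ ?_
  · rw [← aspectRatio, aspectRatio_two_pow_one_div_two_pow_succ_add_one]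
    exact add_two_div_lt_binEnt (j + 1)
  · rw [← aspectRatio, aspectRatio_two_pow_one_div_two_pow_add_one]
    exact add_two_div_lt_binEnt j
end

section
/- In a Huffman (optimal binary prefix-free) code for the uniform distribution on m symbols, writing m = 2^a + b with 0 ≤ b < 2^a (so a = ⌊log₂ m⌋), exactly m - 2b = 2^a - b codewords have length a and the remaining 2b codewords have length a + 1. -/
/-- A binary code is prefix-free if no codeword is a prefix of a different
codeword. -/
def PrefixFreeCode {m : ℕ} (c : Fin m → List Bool) : Prop :=
  ∀ i j : Fin m, i ≠ j → ¬ (c i <+: c j)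

/-!
Lower bound: a prefix-free code satisfies Kraft's inequality `∑ 2^(-ℓᵢ) ≤ 1` (a prefix-free set
without the empty word is uniquely decodable, so Kraft–McMillan applies). Since
`ℓ + 2^(a+1-ℓ) ≥ a + 2` for every natural `ℓ`, summing over the `m` codewords gives
`∑ ℓᵢ ≥ (a + 2) m - 2^(a+1) = a m + 2 b`.

Construction: start from all `2^a` words of length `a` and replace `b` of them by their two
one-letter extensions. This is prefix-free, has the stated length profile, and its total length
is exactly `a m + 2 b`.
-/

open Finset InformationTheory

namespace PrefixCode

theorem uniquelyDecodable_of_isAntichain {α : Type*} {S : Set (List α)}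
    (hS : IsAntichain (· <+: ·) S) (hnil : [] ∉ S) : UniquelyDecodable S := by
  intro L₁
  induction L₁ with
  | nil =>
    rintro (_ | ⟨w, L₂⟩) - h₂ hflat
    · rfl
    · obtain ⟨rfl, -⟩ := List.append_eq_nil_iff.mp hflat.symm
      exact absurd (h₂ [] List.mem_cons_self) hnil
  | cons w₁ L₁ ih =>
    rintro (_ | ⟨w₂, L₂⟩) h₁ h₂ hflat
    · obtain ⟨rfl, -⟩ := List.append_eq_nil_iff.mp hflat
      exact absurd (h₁ [] List.mem_cons_self) hnil
    · simp only [List.flatten_cons] at hflat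
      have hw₁ := h₁ w₁ List.mem_cons_self
      have hw₂ := h₂ w₂ List.mem_cons_self
      obtain rfl : w₁ = w₂ := by
        rcases List.prefix_or_prefix_of_prefix (List.prefix_append w₁ _)
          (hflat ▸ List.prefix_append w₂ _) with h | h
        · exact hS.eq hw₁ hw₂ h
        · exact (hS.eq hw₂ hw₁ h).symm
      rw [ih L₂ (fun w hw => h₁ w (List.mem_cons_of_mem _ hw))
        (fun w hw => h₂ w (List.mem_cons_of_mem _ hw)) (List.append_cancel_left hflat)]

variable {ι : Type*} [Fintype ι]

theorem sum_half_pow_length_le_one {c : ι → List Bool}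
    (hc : Pairwise fun i j => ¬ c i <+: c j) : ∑ i, (1 / 2 : ℝ) ^ (c i).length ≤ 1 := by
  classical
  by_cases hnil : ∃ i, c i = []
  · obtain ⟨i, hi⟩ := hnil
    rw [sum_eq_single i (fun j _ hji => absurd (hi ▸ List.nil_prefix) (hc hji.symm))
      (absurd (mem_univ i)), hi, List.length_nil, pow_zero]
  · have hinj : c.Injective := fun i j h => by_contra fun hij => hc hij (h ▸ List.prefix_refl _)
    have hS : IsAntichain (· <+: ·) (↑(univ.image c) : Set (List Bool)) := by
      rintro _ hi _ hj hne
      obtain ⟨i, -, rfl⟩ := mem_image.mp hi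
      obtain ⟨j, -, rfl⟩ := mem_image.mp hj
      exact hc (ne_of_apply_ne c hne)
    have hkraft :=
      kraft_mcmillan_inequality (uniquelyDecodable_of_isAntichain hS (by simpa using hnil))
    rwa [sum_image hinj.injOn, Fintype.card_bool, Nat.cast_ofNat] at hkraft

theorem succ_le_add_two_pow_mul_half_pow (n ℓ : ℕ) : (n + 1 : ℝ) ≤ ℓ + 2 ^ n * (1 / 2) ^ ℓ := by
  rcases le_or_gt ℓ n with h | h
  · obtain ⟨k, rfl⟩ := Nat.exists_eq_add_of_le h
    have hk : (k + 1 : ℝ) ≤ 2 ^ k := by exact_mod_cast Nat.lt_two_pow_self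
    have hcancel : (2 : ℝ) ^ ℓ * (1 / 2) ^ ℓ = 1 := by rw [← mul_pow]; norm_num
    rw [pow_add, mul_right_comm, hcancel, one_mul]
    push_cast
    linarith
  · have : (n + 1 : ℝ) ≤ ℓ := by exact_mod_cast h
    have : (0 : ℝ) ≤ 2 ^ n * (1 / 2) ^ ℓ := by positivity
    linarith

theorem succ_mul_card_le_sum_length_add_two_pow {c : ι → List Bool}
    (hc : Pairwise fun i j => ¬ c i <+: c j) (n : ℕ) :
    (n + 1) * Fintype.card ι ≤ ∑ i, (c i).length + 2 ^ n := by
  have hpoint :=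
    sum_le_sum fun i (_ : i ∈ univ) => succ_le_add_two_pow_mul_half_pow n (c i).length
  rw [sum_const, card_univ, nsmul_eq_mul, sum_add_distrib, ← mul_sum] at hpoint
  have hkraft := mul_le_mul_of_nonneg_left (sum_half_pow_length_le_one hc)
    (pow_nonneg zero_le_two n : (0 : ℝ) ≤ 2 ^ n)
  have : ((n + 1) * Fintype.card ι : ℝ) ≤ ∑ i, ((c i).length : ℝ) + 2 ^ n := by
    linarith
  exact_mod_cast this

def words (n : ℕ) : Finset (List Bool) :=
  (univ : Finset (List.Vector Bool n)).map ⟨List.Vector.toList, List.Vector.toList_injective⟩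

theorem mem_words {n : ℕ} {w : List Bool} : w ∈ words n ↔ w.length = n := by
  simp only [words, mem_map, mem_univ, true_and, Function.Embedding.coeFn_mk]
  exact ⟨by rintro ⟨v, rfl⟩; exact v.2, fun h => ⟨⟨w, h⟩, rfl⟩⟩

theorem card_words (n : ℕ) : #(words n) = 2 ^ n := by
  simp [words, card_vector]

def children (B : Finset (List Bool)) : Finset (List Bool) :=
  (B ×ˢ univ).image fun p => p.1 ++ [p.2]

theorem card_children (B : Finset (List Bool)) : #(children B) = 2 * #B := by
  rw [children, card_image_of_injective, card_product, card_univ, Fintype.card_bool, mul_comm]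
  rintro ⟨u, x⟩ ⟨v, y⟩ h
  obtain ⟨rfl, hxy⟩ := List.append_inj' h rfl
  simpa using hxy

theorem children_subset_words {a : ℕ} {B : Finset (List Bool)} (hB : B ⊆ words a) :
    children B ⊆ words (a + 1) := by
  simp only [children, subset_iff, mem_image, mem_product, mem_univ, and_true]
  rintro _ ⟨⟨u, x⟩, hu, rfl⟩
  simpa [mem_words] using mem_words.mp (hB hu)

def splitLeaves (a : ℕ) (B : Finset (List Bool)) : Finset (List Bool) :=
  words a \ B ∪ children B

variable {a : ℕ} {B : Finset (List Bool)}

theorem isAntichain_splitLeaves (hB : B ⊆ words a) :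
    IsAntichain (· <+: ·) (splitLeaves a B : Set (List Bool)) := by
  have hC := children_subset_words hB
  intro u hu v hv hne hpre
  apply hne
  simp only [splitLeaves, coe_union, Set.mem_union, mem_coe, mem_sdiff] at hu hv
  rcases hu with ⟨hu, hub⟩ | hu <;> rcases hv with ⟨hv, -⟩ | hv
  · exact hpre.eq_of_length ((mem_words.mp hu).trans (mem_words.mp hv).symm)
  · obtain ⟨⟨w, x⟩, hw, rfl⟩ := mem_image.mp hv
    have hwB := (mem_product.mp hw).1
    have hlen : u.length = w.length := (mem_words.mp hu).trans (mem_words.mp (hB hwB)).symm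
    have huw := List.prefix_of_prefix_length_le hpre (List.prefix_append w [x]) hlen.le
    exact absurd (huw.eq_of_length hlen ▸ hwB) hub
  · have := hpre.length_le
    rw [mem_words.mp (hC hu), mem_words.mp hv] at this
    omega
  · exact hpre.eq_of_length ((mem_words.mp (hC hu)).trans (mem_words.mp (hC hv)).symm)

theorem filter_length_splitLeaves (hB : B ⊆ words a) :
    (splitLeaves a B).filter (·.length = a) = words a \ B := by
  rw [splitLeaves, filter_union, filter_true_of_mem, filter_false_of_mem, union_empty]
  · intro w hw; simp [mem_words.mp (children_subset_words hB hw)]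
  · intro w hw; exact mem_words.mp (mem_sdiff.mp hw).1

theorem filter_length_succ_splitLeaves (hB : B ⊆ words a) :
    (splitLeaves a B).filter (·.length = a + 1) = children B := by
  rw [splitLeaves, filter_union, filter_false_of_mem, filter_true_of_mem, empty_union]
  · intro w hw; exact mem_words.mp (children_subset_words hB hw)
  · intro w hw; simp [mem_words.mp (mem_sdiff.mp hw).1]

theorem disjoint_sdiff_children (hB : B ⊆ words a) : Disjoint (words a \ B) (children B) :=
  disjoint_left.mpr fun w hw hw' => by
    have := mem_words.mp (mem_sdiff.mp hw).1
    have := mem_words.mp (children_subset_words hB hw')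
    omega

theorem card_splitLeaves (hB : B ⊆ words a) : #(splitLeaves a B) = 2 ^ a + #B := by
  have hcard : #B ≤ 2 ^ a := card_words a ▸ card_le_card hB
  rw [splitLeaves, card_union_of_disjoint (disjoint_sdiff_children hB), card_sdiff_of_subset hB,
    card_words, card_children]
  omega

theorem sum_length_splitLeaves (hB : B ⊆ words a) :
    ∑ w ∈ splitLeaves a B, w.length = a * (2 ^ a + #B) + 2 * #B := by
  have hcard : #B ≤ 2 ^ a := card_words a ▸ card_le_card hB
  rw [splitLeaves, sum_union (disjoint_sdiff_children hB),
    sum_const_nat fun w hw => mem_words.mp (mem_sdiff.mp hw).1,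
    sum_const_nat fun w hw => mem_words.mp (children_subset_words hB hw),
    card_sdiff_of_subset hB, card_words, card_children]
  zify [hcard]
  ring

theorem exists_prefixFreeCode_of_isAntichain {S : Finset (List Bool)}
    (hS : IsAntichain (· <+: ·) (S : Set (List Bool))) {m : ℕ} (hm : #S = m) :
    ∃ c : Fin m → List Bool,
      PrefixFreeCode c ∧ ∀ f : List Bool → ℕ, ∑ i, f (c i) = ∑ w ∈ S, f w := by
  let e : Fin m ≃ S := (S.equivFinOfCardEq hm).symm
  refine ⟨fun i => e i, fun i j hij => hS (e i).2 (e j).2 ?_, fun f => ?_⟩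
  · exact Subtype.coe_injective.ne (e.injective.ne hij)
  · rw [e.sum_comp fun w => f w, sum_coe_sort]

end PrefixCode

open PrefixCode

/-- Huffman coding for the uniform distribution on `m = 2^a + b` symbols
(`0 ≤ b < 2^a`): there is a prefix-free binary code with exactly `2^a - b`
codewords of length `a` and `2b` codewords of length `a + 1`, and this code
minimizes the total codeword length among all prefix-free binary codes with
`m` codewords. -/
theorem stmt_11 (a b m : ℕ) (hb : b < 2 ^ a) (hm : m = 2 ^ a + b) :
    ∃ c : Fin m → List Bool, PrefixFreeCode c ∧
      (Finset.univ.filter fun i => (c i).length = a).card = 2 ^ a - b ∧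
      (Finset.univ.filter fun i => (c i).length = a + 1).card = 2 * b ∧
      ∀ c' : Fin m → List Bool, PrefixFreeCode c' →
        ∑ i, (c i).length ≤ ∑ i, (c' i).length := by
  obtain ⟨B, hB, rfl⟩ := exists_subset_card_eq (show b ≤ #(words a) by rw [card_words]; omega)
  obtain ⟨c, hc, hsum⟩ :=
    exists_prefixFreeCode_of_isAntichain (isAntichain_splitLeaves hB) (hm ▸ card_splitLeaves hB)
  have hcount (k : ℕ) : #{i | (c i).length = k} = #{w ∈ splitLeaves a B | w.length = k} := by
    simp only [card_filter, hsum fun w => if w.length = k then 1 else 0]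
  refine ⟨c, hc, ?_, ?_, fun c' hc' => ?_⟩
  · rw [hcount, filter_length_splitLeaves hB, card_sdiff_of_subset hB, card_words]
  · rw [hcount, filter_length_succ_splitLeaves hB, card_children]
  · have hlower := succ_mul_card_le_sum_length_add_two_pow hc' (a + 1)
    rw [Fintype.card_fin, pow_succ] at hlower
    rw [hsum, sum_length_splitLeaves hB]
    subst hm
    linarith
end
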